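/- arXiv:math/0701503 — 4 statements merged into one kernel-verified Lean document; each statement's English description precedes it below -/
import Mathlib

section
/- For k ≥ 0 the polynomial de Rham sequence ℝ ↪ P_{k+3}(K) → P_{k+2}(K;ℝ³) → P_{k+1}(K;ℝ³) → P_k(K) → 0, with maps grad, curl, div, is an exact sequence, where K is a tetrahedron in ℝ³. -/
open Matrix

noncomputable section

abbrev V3 : Type := Fin 3 → ℝ
abbrev M3 : Type := Matrix (Fin 3) (Fin 3) ℝ

/-- Euclidean dot product on `ℝ³`. -/
def dot3 (a b : V3) : ℝ := ∑ i, a i * b i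

/-- Partial derivative in the `i`-th coordinate direction. -/
noncomputable def pd (i : Fin 3) (f : V3 → ℝ) (x : V3) : ℝ := fderiv ℝ f x (Pi.single i 1)

/-- Gradient of a scalar field. -/
noncomputable def vgrad (f : V3 → ℝ) (x : V3) : V3 := fun i => pd i f x

/-- Curl of a vector field on `ℝ³`. -/
noncomputable def vcurl (v : V3 → V3) (x : V3) : V3 :=
  ![pd 1 (fun y => v y 2) x - pd 2 (fun y => v y 1) x,
    pd 2 (fun y => v y 0) x - pd 0 (fun y => v y 2) x,
    pd 0 (fun y => v y 1) x - pd 1 (fun y => v y 0) x]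

/-- Divergence of a vector field on `ℝ³`. -/
noncomputable def vdiv (v : V3 → V3) (x : V3) : ℝ := ∑ i, pd i (fun y => v y i) x

/-- Row-wise curl of a matrix field. -/
noncomputable def mcurl (T : V3 → M3) (x : V3) : M3 :=
  Matrix.of fun i j => vcurl (fun y => T y i) x j

/-- Row-wise divergence of a matrix field. -/
noncomputable def mdiv (T : V3 → M3) (x : V3) : V3 := fun i => vdiv (fun y => T y i) x

/-- Gradient of a vector field: the rows are the gradients of the components. -/
noncomputable def mgrad (v : V3 → V3) (x : V3) : M3 :=
  Matrix.of fun i j => pd j (fun y => v y i) x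

/-- Symmetric gradient (linearized strain) of a vector field. -/
noncomputable def eps (v : V3 → V3) (x : V3) : M3 := (2⁻¹ : ℝ) • (mgrad v x + (mgrad v x)ᵀ)

/-- Column-wise curl: `curl* T = (curl Tᵀ)ᵀ`. -/
noncomputable def mcurlstar (T : V3 → M3) (x : V3) : M3 := (mcurl (fun y => (T y)ᵀ) x)ᵀ

/-- The second order operator `curl curl*`. -/
noncomputable def ccs (T : V3 → M3) (x : V3) : M3 := mcurl (fun y => mcurlstar T y) x

/-- Axial vector of a (skew-symmetric) matrix. -/
def vect (A : M3) : V3 := ![A 2 1, A 0 2, A 1 0]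

/-- Skew-symmetric part of a matrix. -/
def skw (A : M3) : M3 := (2⁻¹ : ℝ) • (A - Aᵀ)

/-- The algebraic operator `Ξ T = Tᵀ - tr(T) I`. -/
def Xi (A : M3) : M3 := Aᵀ - A.trace • (1 : M3)

/-- `f` is (the restriction of) a polynomial of total degree at most `k`. -/
def IsPolyDeg (k : ℕ) (f : V3 → ℝ) : Prop :=
  ∃ q : MvPolynomial (Fin 3) ℝ, q.totalDegree ≤ k ∧ ∀ x, f x = MvPolynomial.eval x q

/-- Vector-valued polynomial field of degree at most `k`. -/
def IsPolyVDeg (k : ℕ) (v : V3 → V3) : Prop := ∀ i, IsPolyDeg k (fun x => v x i)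

/-- Matrix-valued polynomial field of degree at most `k`. -/
def IsPolyMDeg (k : ℕ) (T : V3 → M3) : Prop := ∀ i j, IsPolyDeg k (fun x => T x i j)

open MvPolynomial

abbrev P3 := MvPolynomial (Fin 3) ℝ

lemma hasFDerivAt_eval (q : P3) (x : V3) :
    HasFDerivAt (fun y : V3 => eval y q)
      (∑ i, eval x (pderiv i q) • ContinuousLinearMap.proj (R := ℝ) (φ := fun _ : Fin 3 => ℝ) i) x := by
  induction q using MvPolynomial.induction_on with
  | C a =>
    simp only [eval_C, pderiv_C, map_zero, zero_smul, Finset.sum_const_zero]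
    exact hasFDerivAt_const a x
  | add p q hp hq =>
    simp only [map_add, add_smul, Finset.sum_add_distrib]
    exact hp.add hq
  | mul_X p j hp =>
    have hX : HasFDerivAt (fun y : V3 => y j)
        (ContinuousLinearMap.proj (R := ℝ) (φ := fun _ : Fin 3 => ℝ) j) x :=
      (ContinuousLinearMap.proj (R := ℝ) (φ := fun _ : Fin 3 => ℝ) j).hasFDerivAt
    have := hp.mul hX
    simp only [_root_.map_mul, eval_X] at this ⊢
    refine this.congr_fderiv ?_
    refine ContinuousLinearMap.ext fun v => ?_
    simp [ContinuousLinearMap.proj_apply, pderiv_X, Pi.single_apply,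
      Finset.sum_add_distrib, Finset.mul_sum, mul_ite, ite_mul, Finset.sum_ite_eq']
    rw [Finset.sum_congr rfl (fun i _ => add_mul _ _ _), Finset.sum_add_distrib]
    congr 1
    · simp [apply_ite (eval x), ite_mul, Finset.sum_ite_eq]
    · exact Finset.sum_congr rfl fun i _ => by ring

lemma pd_eval (q : P3) (i : Fin 3) (x : V3) :
    pd i (fun y => eval y q) x = eval x (pderiv i q) := by
  rw [pd, (hasFDerivAt_eval q x).fderiv]
  simp only [ContinuousLinearMap.sum_apply, ContinuousLinearMap.smul_apply,
    ContinuousLinearMap.proj_apply, Pi.single_apply, smul_eq_mul, mul_ite, mul_one, mul_zero,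
    Finset.sum_ite_eq, Finset.mem_univ, if_true]
  rw [Finset.sum_ite_eq' Finset.univ i (fun j => eval x (pderiv j q))]
  simp

lemma eval_eq_zero_of_zeroOn (p : Fin 4 → V3) (hp : AffineIndependent ℝ p)
    (q : P3) (hq : ∀ x ∈ convexHull ℝ (Set.range p), eval x q = 0) (x : V3) :
    eval x q = 0 := by
  have hspan : affineSpan ℝ (Set.range p) = ⊤ := by
    rw [hp.affineSpan_eq_top_iff_card_eq_finrank_add_one]
    simp [Module.finrank_fin_fun]
  have hconv : Convex ℝ (convexHull ℝ (Set.range p)) := convex_convexHull ℝ _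
  have hint : (interior (convexHull ℝ (Set.range p))).Nonempty := by
    rw [hconv.interior_nonempty_iff_affineSpan_eq_top, affineSpan_convexHull]
    exact hspan
  obtain ⟨z₀, hz₀⟩ := hint
  have hana : AnalyticOnNhd ℝ (fun y : V3 => eval y q) Set.univ :=
    AnalyticOnNhd.eval_mvPolynomial q
  have heq : Set.EqOn (fun y : V3 => eval y q) 0 Set.univ := by
    apply hana.eqOn_zero_of_preconnected_of_eventuallyEq_zero isPreconnected_univ
      (Set.mem_univ z₀)
    exact Filter.eventuallyEq_iff_exists_mem.2
      ⟨interior (convexHull ℝ (Set.range p)), isOpen_interior.mem_nhds hz₀,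
        fun y hy => hq y (interior_subset hy)⟩
  exact heq (Set.mem_univ x)

lemma my_pderiv_comm (i j : Fin 3) (q : P3) :
    pderiv i (pderiv j q) = pderiv j (pderiv i q) := by
  induction q using MvPolynomial.induction_on' with
  | monomial m c =>
    simp only [pderiv_monomial]
    by_cases hij : i = j
    · subst hij; rfl
    · congr 1
      · rw [tsub_tsub, tsub_tsub, add_comm]
      · rw [Finsupp.tsub_apply, Finsupp.tsub_apply, Finsupp.single_apply,
          Finsupp.single_apply, if_neg hij, if_neg (Ne.symm hij)]
        simp only [tsub_zero]
        ring
  | add p q hp hq => rw [map_add, map_add, hp, hq, map_add, map_add]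

lemma degree_eq_sum3 (m : Fin 3 →₀ ℕ) : Finsupp.degree m = ∑ i : Fin 3, m i := by
  rw [Finsupp.degree]
  exact Finset.sum_subset (Finset.subset_univ _)
    (fun i _ hi => Finsupp.notMem_support_iff.1 hi)

lemma euler_monomial (m : Fin 3 →₀ ℕ) (c : ℝ) :
    ∑ i : Fin 3, X i * pderiv i (monomial m c) = Finsupp.degree m • monomial m c := by
  rw [degree_eq_sum3, Finset.sum_smul]
  refine Finset.sum_congr rfl fun i _ => ?_
  rw [pderiv_monomial]
  by_cases h : m i = 0
  · simp [h]
  · have hle : Finsupp.single i 1 ≤ m := Finsupp.single_le_iff.2 (Nat.one_le_iff_ne_zero.2 h)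
    rw [X, monomial_mul, one_mul, add_comm, tsub_add_cancel_of_le hle, smul_monomial]
    congr 1
    rw [nsmul_eq_mul]
    ring

lemma euler (n : ℕ) (q : P3) (hq : ∀ m ∈ q.support, Finsupp.degree m = n) :
    ∑ i : Fin 3, X i * pderiv i q = n • q := by
  have : ∑ i : Fin 3, X i * pderiv i q
      = ∑ m ∈ q.support, ∑ i : Fin 3, X i * pderiv i (monomial m (coeff m q)) := by
    rw [Finset.sum_comm]
    refine Finset.sum_congr rfl fun i _ => ?_
    conv_lhs => rw [as_sum q]
    rw [map_sum, Finset.mul_sum]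
  rw [this]
  conv_rhs => rw [as_sum q]
  rw [Finset.smul_sum]
  refine Finset.sum_congr rfl fun m hm => ?_
  rw [euler_monomial, hq m hm]

lemma hom_hc (n : ℕ) (q : P3) :
    ∀ m ∈ (homogeneousComponent n q).support, Finsupp.degree m = n := by
  intro m hm
  rw [mem_support_iff, coeff_homogeneousComponent] at hm
  by_contra h
  simp [h] at hm

lemma hc_monomial (n : ℕ) (m : Fin 3 →₀ ℕ) (c : ℝ) :
    homogeneousComponent n (monomial m c) = if Finsupp.degree m = n then monomial m c else 0 := by
  ext m'
  rw [coeff_homogeneousComponent]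
  rcases eq_or_ne m m' with rfl | h
  · rcases eq_or_ne (Finsupp.degree m) n with h2 | h2 <;> simp [h2, coeff_monomial]
  · simp [coeff_monomial, h, apply_ite (coeff m')]

lemma degree_sub_single (m : Fin 3 →₀ ℕ) (i : Fin 3) (h : m i ≠ 0) :
    Finsupp.degree (m - Finsupp.single i 1) + 1 = Finsupp.degree m := by
  rw [degree_eq_sum3, degree_eq_sum3, Fin.sum_univ_three, Fin.sum_univ_three]
  simp only [Finsupp.tsub_apply, Finsupp.single_apply]
  fin_cases i <;> simp_all <;> omega

lemma pderiv_hc (d : ℕ) (i : Fin 3) (q : P3) :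
    pderiv i (homogeneousComponent (d + 1) q) = homogeneousComponent d (pderiv i q) := by
  induction q using MvPolynomial.induction_on' with
  | monomial m c =>
    rw [hc_monomial, pderiv_monomial, hc_monomial]
    by_cases h : m i = 0
    · simp [h, apply_ite (pderiv i)]
    · have hd := degree_sub_single m i h
      by_cases h2 : Finsupp.degree m = d + 1
      · rw [if_pos h2, if_pos (by omega), pderiv_monomial]
      · rw [if_neg h2, if_neg (by omega), map_zero]
  | add p q hp hq => rw [map_add, map_add, hp, hq, map_add, map_add]

lemma sum_hc (q : P3) (N : ℕ) (h : q.totalDegree < N) :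
    ∑ d ∈ Finset.range N, homogeneousComponent d q = q := by
  conv_rhs => rw [← sum_homogeneousComponent q]
  exact (Finset.sum_subset (Finset.range_subset_range.2 h) fun d _ hd =>
    homogeneousComponent_eq_zero _ q (by simp at hd ⊢; omega)).symm

lemma eulerC (d : ℕ) (q : P3) (h : ∀ m ∈ q.support, Finsupp.degree m = d) :
    X 0 * pderiv 0 q + X 1 * pderiv 1 q + X 2 * pderiv 2 q = C (d : ℝ) * q := by
  have h2 := euler d q h
  rw [Fin.sum_univ_three] at h2
  rw [h2, nsmul_eq_mul, ← map_natCast (C : ℝ →+* P3) d]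

lemma pderiv_hc_symm (q : Fin 3 → P3) (hsym : ∀ i j, pderiv i (q j) = pderiv j (q i))
    (d : ℕ) (i j : Fin 3) :
    pderiv j (homogeneousComponent d (q i)) = pderiv i (homogeneousComponent d (q j)) := by
  cases d with
  | zero => rw [homogeneousComponent_zero, homogeneousComponent_zero, pderiv_C, pderiv_C]
  | succ d => rw [pderiv_hc, pderiv_hc, hsym i j]

lemma Xdel (u : Fin 3 → P3) (j : Fin 3) :
    pderiv j (X 0) * u 0 + pderiv j (X 1) * u 1 + pderiv j (X 2) * u 2 = u j := by
  fin_cases j <;>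
    simp [pderiv_X, Pi.single_apply, Fin.ext_iff]

lemma grad_potential (n : ℕ) (q : Fin 3 → P3) (hdeg : ∀ i, (q i).totalDegree ≤ n)
    (hsym : ∀ i j, pderiv i (q j) = pderiv j (q i)) :
    ∃ F : P3, F.totalDegree ≤ n + 1 ∧ ∀ j, pderiv j F = q j := by
  set v : ℕ → Fin 3 → P3 := fun d i => homogeneousComponent d (q i) with hv
  refine ⟨∑ d ∈ Finset.range (n + 1), (((d : ℝ) + 1)⁻¹) •
      (X 0 * v d 0 + X 1 * v d 1 + X 2 * v d 2), ?_, ?_⟩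
  · refine (totalDegree_finset_sum _ _).trans (Finset.sup_le fun d hd => ?_)
    refine (totalDegree_smul_le _ _).trans ?_
    have hb : ∀ i : Fin 3, (X i * v d i).totalDegree ≤ n + 1 := fun i => by
      refine (totalDegree_mul _ _).trans ?_
      have h1 : (X i : P3).totalDegree ≤ 1 := (totalDegree_X (R := ℝ) i).le
      have h2 : (v d i).totalDegree ≤ d := (homogeneousComponent_isHomogeneous d (q i)).totalDegree_le
      have : d ≤ n := by simpa using Finset.mem_range_succ_iff.mp hd
      omega
    exact (totalDegree_add _ _).trans (by
      simp only [max_le_iff]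
      exact ⟨(totalDegree_add _ _).trans (by simp [max_le_iff, hb 0, hb 1]), hb 2⟩)
  · intro j
    rw [map_sum]
    have hstep : ∀ d ∈ Finset.range (n + 1),
        pderiv j ((((d : ℝ) + 1)⁻¹) • (X 0 * v d 0 + X 1 * v d 1 + X 2 * v d 2)) = v d j := by
      intro d _
      have hswap : ∀ i, pderiv j (v d i) = pderiv i (v d j) :=
        fun i => pderiv_hc_symm q hsym d i j
      have hE := eulerC d (v d j) (hom_hc d (q j))
      have hdne : ((d : ℝ) + 1) ≠ 0 := by positivity
      have hC : (C (((d : ℝ) + 1)⁻¹) : P3) * (1 + C (d : ℝ)) = 1 := by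
        have h1 : (1 + C (d : ℝ) : P3) = C ((d : ℝ) + 1) := by
          rw [map_add, add_comm, MvPolynomial.C_1]
        rw [h1, ← _root_.map_mul, inv_mul_cancel₀ hdne, MvPolynomial.C_1]
      have hX := Xdel (v d) j
      rw [(pderiv j).map_smul, map_add, map_add, pderiv_mul, pderiv_mul, pderiv_mul,
        hswap 0, hswap 1, hswap 2, smul_eq_C_mul]
      linear_combination C (((d : ℝ) + 1)⁻¹) * hX + C (((d : ℝ) + 1)⁻¹) * hE + (v d j) * hC
    rw [Finset.sum_congr rfl hstep, hv]
    exact sum_hc (q j) (n + 1) (Nat.lt_succ_of_le (hdeg j))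

lemma curl_inner (d : ℝ) (ua ub uc : P3) (a b c : Fin 3)
    (hE : X a * pderiv a ua + X b * pderiv b ua + X c * pderiv c ua = C d * ua)
    (hdv : pderiv a ua + pderiv b ub + pderiv c uc = 0)
    (hba : pderiv b (X a : P3) = 0) (hbb : pderiv b (X b : P3) = 1)
    (hbc : pderiv c (X c : P3) = 1) (hca : pderiv c (X a : P3) = 0)
    (hdne : d + 2 ≠ 0) :
    (-(d + 2)⁻¹) • pderiv b (X a * ub - X b * ua)
      - (-(d + 2)⁻¹) • pderiv c (X c * ua - X a * uc) = ua := by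
  have hC : (C (-(d + 2)⁻¹) : P3) * (C d + 2) = -1 := by
    have h1 : (C d + 2 : P3) = C (d + 2) := by rw [map_add, map_ofNat]
    rw [h1, ← _root_.map_mul, show -(d + 2)⁻¹ * (d + 2) = -1 by field_simp]
    simp
  rw [map_sub, map_sub, pderiv_mul, pderiv_mul, pderiv_mul, pderiv_mul,
    hba, hbb, hbc, hca, smul_eq_C_mul, smul_eq_C_mul]
  linear_combination (C (-(d + 2)⁻¹) * X a) * hdv - C (-(d + 2)⁻¹) * hE - ua * hC

lemma curl_potential (n : ℕ) (q : Fin 3 → P3) (hdeg : ∀ i, (q i).totalDegree ≤ n)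
    (hdiv : pderiv 0 (q 0) + pderiv 1 (q 1) + pderiv 2 (q 2) = 0) :
    ∃ W : Fin 3 → P3, (∀ j, (W j).totalDegree ≤ n + 1) ∧
      pderiv 1 (W 2) - pderiv 2 (W 1) = q 0 ∧
      pderiv 2 (W 0) - pderiv 0 (W 2) = q 1 ∧
      pderiv 0 (W 1) - pderiv 1 (W 0) = q 2 := by
  set v : ℕ → Fin 3 → P3 := fun d i => homogeneousComponent d (q i) with hv
  have hdivd : ∀ d, pderiv 0 (v d 0) + pderiv 1 (v d 1) + pderiv 2 (v d 2) = 0 := by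
    intro d
    cases d with
    | zero => simp [hv, homogeneousComponent_zero]
    | succ d =>
      simp only [hv]
      rw [pderiv_hc, pderiv_hc, pderiv_hc, ← map_add, ← map_add, hdiv, map_zero]
  have hEd : ∀ d (i : Fin 3),
      X 0 * pderiv 0 (v d i) + X 1 * pderiv 1 (v d i) + X 2 * pderiv 2 (v d i)
        = C (d : ℝ) * v d i := fun d i => eulerC d (v d i) (hom_hc d (q i))
  have hdne : ∀ d : ℕ, (d : ℝ) + 2 ≠ 0 := fun d => by positivity
  set W : Fin 3 → P3 := fun j => ∑ d ∈ Finset.range (n + 1),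
      (-(((d : ℝ) + 2)⁻¹)) • (X (j + 1) * v d (j + 2) - X (j + 2) * v d (j + 1)) with hW
  have hdegW : ∀ j, (W j).totalDegree ≤ n + 1 := by
    intro j
    refine (totalDegree_finset_sum _ _).trans (Finset.sup_le fun d hd => ?_)
    refine (totalDegree_smul_le _ _).trans ?_
    have hd' : d ≤ n := by simpa using Finset.mem_range_succ_iff.mp hd
    have hb : ∀ i i' : Fin 3, (X i * v d i').totalDegree ≤ n + 1 := fun i i' => by
      refine (totalDegree_mul _ _).trans ?_
      have h1 : (X i : P3).totalDegree ≤ 1 := (totalDegree_X (R := ℝ) i).le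
      have h2 : (v d i').totalDegree ≤ d :=
        (homogeneousComponent_isHomogeneous d (q i')).totalDegree_le
      omega
    calc (X (j+1) * v d (j+2) - X (j+2) * v d (j+1)).totalDegree
        ≤ max (X (j+1) * v d (j+2)).totalDegree (X (j+2) * v d (j+1)).totalDegree := by
          rw [sub_eq_add_neg]
          refine (totalDegree_add _ _).trans ?_
          rw [totalDegree_neg]
      _ ≤ n + 1 := max_le (hb _ _) (hb _ _)
  have key : ∀ (a b c : Fin 3),
      (∀ d : ℕ, X a * pderiv a (v d a) + X b * pderiv b (v d a) + X c * pderiv c (v d a)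
        = C (d : ℝ) * v d a) →
      (∀ d : ℕ, pderiv a (v d a) + pderiv b (v d b) + pderiv c (v d c) = 0) →
      pderiv b (X a : P3) = 0 → pderiv b (X b : P3) = 1 →
      pderiv c (X c : P3) = 1 → pderiv c (X a : P3) = 0 →
      c + 1 = a → c + 2 = b → b + 1 = c → b + 2 = a →
      pderiv b (W c) - pderiv c (W b) = q a := by
    intro a b c hE' hdv' hba hbb hbc hca e1 e2 e3 e4
    simp only [hW, e1, e2, e3, e4]
    rw [map_sum, map_sum, ← Finset.sum_sub_distrib]
    have hstep : ∀ d ∈ Finset.range (n + 1),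
        pderiv b ((-(((d : ℝ) + 2)⁻¹)) • (X a * v d b - X b * v d a))
          - pderiv c ((-(((d : ℝ) + 2)⁻¹)) • (X c * v d a - X a * v d c)) = v d a := by
      intro d _
      rw [(pderiv b).map_smul, (pderiv c).map_smul]
      exact curl_inner (d : ℝ) (v d a) (v d b) (v d c) a b c (hE' d) (hdv' d)
        hba hbb hbc hca (hdne d)
    rw [Finset.sum_congr rfl hstep, hv]
    exact sum_hc (q a) (n + 1) (Nat.lt_succ_of_le (hdeg a))
  refine ⟨W, hdegW, ?_, ?_, ?_⟩
  · exact key 0 1 2 (fun d => hEd d 0) (fun d => hdivd d)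
      (pderiv_X_of_ne (by decide)) (pderiv_X_self 1) (pderiv_X_self 2)
      (pderiv_X_of_ne (by decide)) (by decide) (by decide) (by decide) (by decide)
  · exact key 1 2 0 (fun d => by linear_combination hEd d 1)
      (fun d => by linear_combination hdivd d)
      (pderiv_X_of_ne (by decide)) (pderiv_X_self 2) (pderiv_X_self 0)
      (pderiv_X_of_ne (by decide)) (by decide) (by decide) (by decide) (by decide)
  · exact key 2 0 1 (fun d => by linear_combination hEd d 2)
      (fun d => by linear_combination hdivd d)
      (pderiv_X_of_ne (by decide)) (pderiv_X_self 0) (pderiv_X_self 1)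
      (pderiv_X_of_ne (by decide)) (by decide) (by decide) (by decide) (by decide)

lemma div_potential (n : ℕ) (g : P3) (hdeg : g.totalDegree ≤ n) :
    ∃ V : Fin 3 → P3, (∀ j, (V j).totalDegree ≤ n + 1) ∧
      pderiv 0 (V 0) + pderiv 1 (V 1) + pderiv 2 (V 2) = g := by
  set gd : ℕ → P3 := fun d => homogeneousComponent d g with hgd
  set V : Fin 3 → P3 := fun j => ∑ d ∈ Finset.range (n + 1),
      ((((d : ℝ) + 3)⁻¹)) • (X j * gd d) with hV
  refine ⟨V, ?_, ?_⟩
  · intro j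
    refine (totalDegree_finset_sum _ _).trans (Finset.sup_le fun d hd => ?_)
    refine (totalDegree_smul_le _ _).trans ((totalDegree_mul _ _).trans ?_)
    have h1 : (X j : P3).totalDegree ≤ 1 := (totalDegree_X (R := ℝ) j).le
    have h2 : (gd d).totalDegree ≤ d := (homogeneousComponent_isHomogeneous d g).totalDegree_le
    have hd' : d ≤ n := by simpa using Finset.mem_range_succ_iff.mp hd
    omega
  · simp only [hV]
    rw [map_sum, map_sum, map_sum, ← Finset.sum_add_distrib, ← Finset.sum_add_distrib]
    have hstep : ∀ d ∈ Finset.range (n + 1),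
        pderiv 0 ((((d : ℝ) + 3)⁻¹) • (X 0 * gd d)) + pderiv 1 ((((d : ℝ) + 3)⁻¹) • (X 1 * gd d))
          + pderiv 2 ((((d : ℝ) + 3)⁻¹) • (X 2 * gd d)) = gd d := by
      intro d _
      have hE := eulerC d (gd d) (hom_hc d g)
      have hdne : ((d : ℝ) + 3) ≠ 0 := by positivity
      have hC : (C (((d : ℝ) + 3)⁻¹) : P3) * (C (d : ℝ) + 3) = 1 := by
        have h1 : (C (d : ℝ) + 3 : P3) = C ((d : ℝ) + 3) := by rw [map_add, map_ofNat]
        rw [h1, ← _root_.map_mul, inv_mul_cancel₀ hdne, MvPolynomial.C_1]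
      rw [(pderiv 0).map_smul, (pderiv 1).map_smul, (pderiv 2).map_smul,
        pderiv_mul, pderiv_mul, pderiv_mul, pderiv_X_self, pderiv_X_self, pderiv_X_self,
        smul_eq_C_mul, smul_eq_C_mul, smul_eq_C_mul]
      linear_combination C (((d : ℝ) + 3)⁻¹) * hE + gd d * hC
    rw [Finset.sum_congr rfl hstep, hgd]
    exact sum_hc g (n + 1) (Nat.lt_succ_of_le hdeg)

/-- exactness of the polynomial de Rham sequence
`ℝ ↪ P_{k+3}(K) → P_{k+2}(K;ℝ³) → P_{k+1}(K;ℝ³) → P_k(K) → 0`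
(maps `grad`, `curl`, `div`) on a tetrahedron `K ⊂ ℝ³`. -/
theorem polynomial_deRham_exact (k : ℕ) (p : Fin 4 → V3) (hp : AffineIndependent ℝ p)
    (K : Set V3) (hK : K = convexHull ℝ (Set.range p)) :
    -- grad ∘ (ℝ ↪) = 0 and exactness at P_{k+3}: ker grad = constants
    (∀ f : V3 → ℝ, IsPolyDeg (k + 3) f → (∀ x ∈ K, vgrad f x = 0) →
      ∃ c : ℝ, ∀ x ∈ K, f x = c) ∧
    -- curl ∘ grad = 0
    (∀ f : V3 → ℝ, IsPolyDeg (k + 3) f → ∀ x, vcurl (fun y => vgrad f y) x = 0) ∧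
    -- exactness at P_{k+2}(K;ℝ³): ker curl = range grad
    (∀ v : V3 → V3, IsPolyVDeg (k + 2) v → (∀ x ∈ K, vcurl v x = 0) →
      ∃ f : V3 → ℝ, IsPolyDeg (k + 3) f ∧ ∀ x ∈ K, vgrad f x = v x) ∧
    -- div ∘ curl = 0
    (∀ v : V3 → V3, IsPolyVDeg (k + 2) v → ∀ x, vdiv (fun y => vcurl v y) x = 0) ∧
    -- exactness at P_{k+1}(K;ℝ³): ker div = range curl
    (∀ v : V3 → V3, IsPolyVDeg (k + 1) v → (∀ x ∈ K, vdiv v x = 0) →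
      ∃ w : V3 → V3, IsPolyVDeg (k + 2) w ∧ ∀ x ∈ K, vcurl w x = v x) ∧
    -- surjectivity of div onto P_k(K)
    (∀ g : V3 → ℝ, IsPolyDeg k g →
      ∃ v : V3 → V3, IsPolyVDeg (k + 1) v ∧ ∀ x ∈ K, vdiv v x = g x) := by

  subst hK
  have hzero : ∀ q : P3,
      (∀ x ∈ convexHull ℝ (Set.range p), eval x q = 0) → q = 0 := fun q hq =>
    MvPolynomial.funext fun x => by rw [eval_eq_zero_of_zeroOn p hp q hq x, map_zero]
  refine ⟨?_, ?_, ?_, ?_, ?_, ?_⟩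
  · -- ker grad = constants
    intro f hf hgrad
    obtain ⟨q, hqd, hfq⟩ := hf
    have hfun : f = fun y => eval y q := funext hfq
    subst hfun
    have hz : ∀ j : Fin 3, pderiv j q = 0 := by
      intro j
      apply hzero
      intro x hx
      have h0 := congrFun (hgrad x hx) j
      rw [← pd_eval]
      exact h0
    refine ⟨eval 0 q, fun x _ => ?_⟩
    exact is_const_of_fderiv_eq_zero
      (fun y => (hasFDerivAt_eval q y).differentiableAt)
      (fun y => by rw [(hasFDerivAt_eval q y).fderiv]; simp [hz]) x 0
  · -- curl grad = 0
    intro f hf x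
    obtain ⟨q, hqd, hfq⟩ := hf
    have hfun : f = fun y => eval y q := funext hfq
    subst hfun
    have hg : ∀ i : Fin 3, (fun y => vgrad (fun z => eval z q) y i)
        = fun y => eval y (pderiv i q) := fun i => funext fun y => pd_eval q i y
    funext j
    fin_cases j
    · show pd 1 (fun y => vgrad _ y 2) x - pd 2 (fun y => vgrad _ y 1) x = 0
      rw [hg 1, hg 2, pd_eval, pd_eval, my_pderiv_comm 1 2 q, sub_self]
    · show pd 2 (fun y => vgrad _ y 0) x - pd 0 (fun y => vgrad _ y 2) x = 0
      rw [hg 0, hg 2, pd_eval, pd_eval, my_pderiv_comm 2 0 q, sub_self]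
    · show pd 0 (fun y => vgrad _ y 1) x - pd 1 (fun y => vgrad _ y 0) x = 0
      rw [hg 0, hg 1, pd_eval, pd_eval, my_pderiv_comm 0 1 q, sub_self]
  · -- ker curl = range grad
    intro v hv hcurl
    choose q hqd hqe using hv
    have hvfun : ∀ i, (fun x : V3 => v x i) = fun x => eval x (q i) :=
      fun i => funext (hqe i)
    have key : ∀ a b : Fin 3, (∀ x ∈ convexHull ℝ (Set.range p),
        pd a (fun y => v y b) x - pd b (fun y => v y a) x = 0) →
        pderiv a (q b) = pderiv b (q a) := by
      intro a b h
      have h2 : pderiv a (q b) - pderiv b (q a) = 0 := by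
        apply hzero
        intro x hx
        have h3 := h x hx
        rw [hvfun a, hvfun b, pd_eval, pd_eval] at h3
        rw [map_sub]
        exact h3
      exact sub_eq_zero.mp h2
    have s0 : pderiv 1 (q 2) = pderiv 2 (q 1) :=
      key 1 2 fun x hx => congrFun (hcurl x hx) 0
    have s1 : pderiv 2 (q 0) = pderiv 0 (q 2) :=
      key 2 0 fun x hx => congrFun (hcurl x hx) 1
    have s2 : pderiv 0 (q 1) = pderiv 1 (q 0) :=
      key 0 1 fun x hx => congrFun (hcurl x hx) 2
    have hsym : ∀ i j, pderiv i (q j) = pderiv j (q i) := by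
      intro i j
      fin_cases i <;> fin_cases j <;> simp only [Fin.zero_eta, Fin.mk_one, Fin.reduceFinMk, Fin.isValue] <;>
        (first | with_reducible rfl | with_reducible exact s0 | with_reducible exact s0.symm | with_reducible exact s1 | with_reducible exact s1.symm | with_reducible exact s2 | with_reducible exact s2.symm)
    obtain ⟨F, hFdeg, hFgrad⟩ := grad_potential (k + 2) q hqd hsym
    refine ⟨fun x => eval x F, ⟨F, hFdeg, fun x => rfl⟩, fun x hx => ?_⟩
    funext j
    show pd j (fun y => eval y F) x = v x j
    rw [pd_eval, hFgrad j, ← hqe j x]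
  · -- div curl = 0
    intro v hv x
    choose q hqd hqe using hv
    have hvfun : ∀ i, (fun y : V3 => v y i) = fun y => eval y (q i) :=
      fun i => funext (hqe i)
    have hc0 : (fun y => vcurl v y 0)
        = fun y => eval y (pderiv 1 (q 2) - pderiv 2 (q 1)) := by
      funext y
      show pd 1 (fun z => v z 2) y - pd 2 (fun z => v z 1) y = _
      rw [hvfun 1, hvfun 2, pd_eval, pd_eval, map_sub]
    have hc1 : (fun y => vcurl v y 1)
        = fun y => eval y (pderiv 2 (q 0) - pderiv 0 (q 2)) := by
      funext y
      show pd 2 (fun z => v z 0) y - pd 0 (fun z => v z 2) y = _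
      rw [hvfun 0, hvfun 2, pd_eval, pd_eval, map_sub]
    have hc2 : (fun y => vcurl v y 2)
        = fun y => eval y (pderiv 0 (q 1) - pderiv 1 (q 0)) := by
      funext y
      show pd 0 (fun z => v z 1) y - pd 1 (fun z => v z 0) y = _
      rw [hvfun 0, hvfun 1, pd_eval, pd_eval, map_sub]
    show ∑ i, pd i (fun y => vcurl v y i) x = 0
    rw [Fin.sum_univ_three, hc0, hc1, hc2, pd_eval, pd_eval, pd_eval]
    simp only [map_sub]
    have e01 := congrArg (eval x) (my_pderiv_comm 0 1 (q 2))
    have e12 := congrArg (eval x) (my_pderiv_comm 1 2 (q 0))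
    have e20 := congrArg (eval x) (my_pderiv_comm 2 0 (q 1))
    linear_combination e01 + e12 + e20
  · -- ker div = range curl
    intro v hv hdivv
    choose q hqd hqe using hv
    have hvfun : ∀ i, (fun y : V3 => v y i) = fun y => eval y (q i) :=
      fun i => funext (hqe i)
    have hdp : pderiv 0 (q 0) + pderiv 1 (q 1) + pderiv 2 (q 2) = 0 := by
      apply hzero
      intro x hx
      have h3 := hdivv x hx
      have h2 : vdiv v x = eval x (pderiv 0 (q 0)) + eval x (pderiv 1 (q 1))
          + eval x (pderiv 2 (q 2)) := by
        show ∑ i, pd i (fun y => v y i) x = _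
        rw [Fin.sum_univ_three, hvfun 0, hvfun 1, hvfun 2, pd_eval, pd_eval, pd_eval]
      rw [map_add, map_add, ← h2]
      exact h3
    obtain ⟨W, hWdeg, h0, h1, h2⟩ := curl_potential (k + 1) q hqd hdp
    refine ⟨fun x j => eval x (W j), fun j => ⟨W j, hWdeg j, fun x => rfl⟩, fun x hx => ?_⟩
    funext j
    fin_cases j
    · show pd 1 (fun y => eval y (W 2)) x - pd 2 (fun y => eval y (W 1)) x = v x 0
      rw [pd_eval, pd_eval, ← map_sub, h0, ← hqe 0 x]
    · show pd 2 (fun y => eval y (W 0)) x - pd 0 (fun y => eval y (W 2)) x = v x 1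
      rw [pd_eval, pd_eval, ← map_sub, h1, ← hqe 1 x]
    · show pd 0 (fun y => eval y (W 1)) x - pd 1 (fun y => eval y (W 0)) x = v x 2
      rw [pd_eval, pd_eval, ← map_sub, h2, ← hqe 2 x]
  · -- div surjective
    intro g hg
    obtain ⟨G, hGdeg, hGeq⟩ := hg
    obtain ⟨V, hVdeg, hVdiv⟩ := div_potential k G hGdeg
    refine ⟨fun x j => eval x (V j), fun j => ⟨V j, hVdeg j, fun x => rfl⟩, fun x hx => ?_⟩
    show ∑ i, pd i (fun y => eval y (V i)) x = g x
    rw [Fin.sum_univ_three, pd_eval, pd_eval, pd_eval, ← map_add, ← map_add, hVdiv, hGeq x]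
end
end

section
/- If S is a symmetric-matrix-valued polynomial field on ℝ³ of degree at most k+3 with curl curl* S = 0, then S = ε(u) for some polynomial vector field u of degree at most k+4. -/
open Matrix

noncomputable section

open MvPolynomial


lemma eval_differentiable (q : P3) : Differentiable ℝ (fun x : V3 => eval x q) := by
  induction q using MvPolynomial.induction_on with
  | C a => simpa using differentiable_const a
  | add p r hp hr => simpa using hp.fun_add hr
  | mul_X p n hp =>
      simp only [eval_mul, eval_X]
      exact hp.mul (ContinuousLinearMap.proj (R := ℝ) (φ := fun _ : Fin 3 => ℝ) n).differentiable

lemma pderiv_comm' (i j : Fin 3) (p : P3) :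
    pderiv i (pderiv j p) = pderiv j (pderiv i p) := by
  induction p using MvPolynomial.induction_on' with
  | add p r hp hr => simp [map_add, hp, hr]
  | monomial s a =>
      rcases eq_or_ne i j with h | h
      · rw [h]
      · simp only [pderiv_monomial, Finsupp.tsub_apply, Finsupp.single_apply,
          if_neg h, if_neg (Ne.symm h), tsub_zero]
        rw [tsub_tsub, tsub_tsub, add_comm (Finsupp.single j 1)]
        ring_nf

/-- degree of an exponent vector -/
abbrev dg (m : Fin 3 →₀ ℕ) : ℕ := m.sum fun _ e => e

lemma dg_eq (m : Fin 3 →₀ ℕ) : dg m = m 0 + m 1 + m 2 := by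
  rw [show dg m = ∑ i : Fin 3, m i from Finsupp.sum_fintype _ _ (fun _ => rfl)]
  simp [Fin.sum_univ_three]

lemma dg_add (a b : Fin 3 →₀ ℕ) : dg (a + b) = dg a + dg b :=
  Finsupp.sum_add_index' (fun _ => rfl) (fun _ _ _ => rfl)

lemma dg_single (i : Fin 3) (n : ℕ) : dg (Finsupp.single i n) = n :=
  Finsupp.sum_single_index rfl

lemma dg_eq_zero {m : Fin 3 →₀ ℕ} (h : dg m = 0) : m = 0 := by
  ext i
  simp only [Finsupp.coe_zero, Pi.zero_apply]
  by_contra hne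
  have hi : i ∈ m.support := Finsupp.mem_support_iff.mpr hne
  have hle : m i ≤ dg m :=
    Finset.single_le_sum (f := fun j => m j) (fun _ _ => Nat.zero_le _) hi
  omega

/-- The Euler-type operator `p ↦ ∑ xᵢ ∂ᵢ p`. -/
noncomputable def Eop : P3 →ₗ[ℝ] P3 :=
  ∑ i : Fin 3, (LinearMap.mulLeft ℝ (X i)).comp (pderiv i).toLinearMap

lemma Eop_apply (p : P3) : Eop p = ∑ i : Fin 3, X i * pderiv i p := by
  simp [Eop, LinearMap.sum_apply]

lemma Eop_monomial (s : Fin 3 →₀ ℕ) (a : ℝ) :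
    Eop (monomial s a) = (dg s) • monomial s a := by
  rw [Eop_apply]
  have h : ∀ i : Fin 3, X i * pderiv i (monomial s a) = monomial s (a * s i) := by
    intro i
    rw [pderiv_monomial, X, monomial_mul, one_mul]
    rcases Nat.eq_zero_or_pos (s i) with h0 | h0
    · simp [h0]
    · congr 1
      rw [add_comm, tsub_add_cancel_of_le]
      rwa [Finsupp.single_le_iff]
  simp only [h]
  rw [show ∑ i : Fin 3, (monomial s (a * (s i : ℝ)) : P3)
      = monomial s (a * ∑ i : Fin 3, (s i : ℝ)) by rw [Finset.mul_sum, map_sum]]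
  rw [smul_monomial]
  congr 1
  rw [nsmul_eq_mul, dg_eq, Fin.sum_univ_three]
  push_cast
  ring

lemma coeff_Eop (m : Fin 3 →₀ ℕ) (p : P3) :
    coeff m (Eop p) = (dg m : ℝ) * coeff m p := by
  conv_lhs => rw [p.as_sum, map_sum]
  rw [MvPolynomial.coeff_sum]
  simp only [Eop_monomial, coeff_smul, coeff_monomial, smul_ite, smul_zero]
  rw [Finset.sum_ite_eq' p.support m (fun s => (dg s) • coeff s p)]
  rcases Finset.decidableMem m p.support with hm | hm
  · rw [if_neg hm, MvPolynomial.notMem_support_iff.mp hm, mul_zero]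
  · rw [if_pos hm, nsmul_eq_mul]


/-- Scale each monomial of degree `d` by `1/d`. -/
noncomputable def scl0 (g : P3) : P3 :=
  ∑ m ∈ g.support, monomial m (((dg m : ℝ))⁻¹ * coeff m g)

lemma coeff_scl0 (m : Fin 3 →₀ ℕ) (g : P3) :
    coeff m (scl0 g) = ((dg m : ℝ))⁻¹ * coeff m g := by
  rw [scl0, MvPolynomial.coeff_sum]
  simp only [coeff_monomial]
  rw [Finset.sum_ite_eq' g.support m (fun s => ((dg s : ℝ))⁻¹ * coeff s g)]
  rcases Finset.decidableMem m g.support with hm | hm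
  · rw [if_neg hm, MvPolynomial.notMem_support_iff.mp hm, mul_zero]
  · rw [if_pos hm]

lemma totalDegree_scl0_le (g : P3) : (scl0 g).totalDegree ≤ g.totalDegree := by
  apply MvPolynomial.totalDegree_le_of_support_subset
  intro m hm
  rw [MvPolynomial.mem_support_iff] at hm ⊢
  rw [coeff_scl0] at hm
  intro h0
  rw [h0, mul_zero] at hm
  exact hm rfl

lemma Eop_scl0 (g : P3) (h0 : coeff 0 g = 0) : Eop (scl0 g) = g := by
  apply MvPolynomial.ext
  intro m
  rw [coeff_Eop, coeff_scl0]
  rcases Nat.eq_zero_or_pos (dg m) with hd | hd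
  · rw [hd, dg_eq_zero hd]
    simpa using h0.symm
  · rw [← mul_assoc, mul_inv_cancel₀ (by exact_mod_cast hd.ne'), one_mul]

lemma pderiv_sum_X_mul (v : Fin 3 → P3)
    (hcf : ∀ a b, pderiv a (v b) = pderiv b (v a)) (j : Fin 3) :
    pderiv j (∑ i : Fin 3, X i * v i) = Eop (v j) + v j := by
  rw [map_sum]
  have h : ∀ i : Fin 3, pderiv j (X i * v i)
      = (if i = j then v i else 0) + X i * pderiv i (v j) := by
    intro i
    rw [pderiv_mul, hcf j i]
    rcases eq_or_ne i j with h | h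
    · subst h; rw [pderiv_X_self, if_pos rfl, one_mul]
    · rw [pderiv_X_of_ne h, if_neg h, zero_mul]
  simp only [h]
  rw [Finset.sum_add_distrib, Finset.sum_ite_eq' Finset.univ j (fun i => v i),
    if_pos (Finset.mem_univ j), Eop_apply, add_comm]

lemma Dinj {a b : P3} (h : Eop a + a = Eop b + b) : a = b := by
  apply MvPolynomial.ext
  intro m
  have hc := congrArg (coeff m) h
  rw [coeff_add, coeff_add, coeff_Eop, coeff_Eop] at hc
  have hne : (dg m : ℝ) + 1 ≠ 0 := by positivity
  have : ((dg m : ℝ) + 1) * coeff m a = ((dg m : ℝ) + 1) * coeff m b := by ring_nf; linarith [hc]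
  exact mul_left_cancel₀ hne this

lemma totalDegree_pderiv_le (i : Fin 3) (p : P3) (n : ℕ) (h : p.totalDegree ≤ n + 1) :
    (pderiv i p).totalDegree ≤ n := by
  classical
  conv_lhs => rw [p.as_sum, map_sum]
  refine le_trans (MvPolynomial.totalDegree_finset_sum _ _) (Finset.sup_le ?_)
  intro s hs
  rw [pderiv_monomial]
  rcases Nat.eq_zero_or_pos (s i) with h0 | h0
  · simp [h0]
  · refine le_trans (MvPolynomial.totalDegree_monomial_le _ _) ?_
    have hds : dg s ≤ n + 1 := le_trans (MvPolynomial.le_totalDegree hs) h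
    have hsub : (s - Finsupp.single i 1) + Finsupp.single i 1 = s :=
      tsub_add_cancel_of_le (Finsupp.single_le_iff.mpr h0)
    have key : dg (s - Finsupp.single i 1) + 1 = dg s := by
      conv_rhs => rw [← hsub]
      rw [dg_add, dg_single]
    show dg (s - Finsupp.single i 1) ≤ n
    omega

/-- Polynomial Poincaré lemma for gradients on `ℝ³`. -/
lemma polyPoincare (n : ℕ) (v : Fin 3 → P3)
    (hcf : ∀ a b, pderiv a (v b) = pderiv b (v a))
    (hdeg : ∀ i, (v i).totalDegree ≤ n) :
    ∃ f : P3, (∀ j, pderiv j f = v j) ∧ f.totalDegree ≤ n + 1 := by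
  set g : P3 := ∑ i : Fin 3, X i * v i with hg
  have h0 : coeff 0 g = 0 := by
    have : constantCoeff g = 0 := by
      rw [hg, map_sum]
      simp [_root_.map_mul, constantCoeff_X]
    simpa [MvPolynomial.constantCoeff_eq] using this
  refine ⟨scl0 g, fun j => ?_, ?_⟩
  · apply Dinj
    have h1 : pderiv j g = Eop (v j) + v j := pderiv_sum_X_mul v hcf j
    have h2 : pderiv j g = Eop (pderiv j (scl0 g)) + pderiv j (scl0 g) := by
      conv_lhs => rw [← Eop_scl0 g h0]
      exact pderiv_sum_X_mul (fun i => pderiv i (scl0 g))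
        (fun a b => pderiv_comm' a b (scl0 g)) j
    rw [← h2, h1]
  · refine le_trans (totalDegree_scl0_le g) ?_
    refine le_trans (MvPolynomial.totalDegree_finset_sum _ _) (Finset.sup_le ?_)
    intro i _
    refine le_trans (MvPolynomial.totalDegree_mul _ _) ?_
    rw [MvPolynomial.totalDegree_X]
    have := hdeg i
    omega



open MvPolynomial

/-- Polynomial analogue of `vcurl`. -/
noncomputable def pcurl (w : Fin 3 → P3) : Fin 3 → P3 :=
  ![pderiv 1 (w 2) - pderiv 2 (w 1),
    pderiv 2 (w 0) - pderiv 0 (w 2),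
    pderiv 0 (w 1) - pderiv 1 (w 0)]

lemma vcurl_eval (w : Fin 3 → P3) (x : V3) (j : Fin 3) :
    vcurl (fun y i => eval y (w i)) x j = eval x (pcurl w j) := by
  fin_cases j <;>
    simp [vcurl, pcurl, pd_eval, map_sub, Matrix.cons_val_zero, Matrix.cons_val_one,
      Matrix.head_cons, Matrix.cons_val_two, Matrix.vecHead, Matrix.vecTail]


set_option maxHeartbeats 3000000 in
/-- a symmetric polynomial matrix field of degree ≤ k+3 with
`curl curl* S = 0` is the symmetric gradient of a polynomial vector field of degree ≤ k+4. -/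
theorem ccs_ker_eq_eps_range (k : ℕ) (S : V3 → M3)
    (hdeg : IsPolyMDeg (k + 3) S) (hsym : ∀ x, (S x)ᵀ = S x)
    (hccs : ∀ x, ccs S x = 0) :
    ∃ u : V3 → V3, IsPolyVDeg (k + 4) u ∧ ∀ x, eps u x = S x := by

  classical
  choose q hq1 hq2' using fun i j => hdeg i j
  have hq2 : ∀ (i j : Fin 3) (x : V3), S x i j = eval x (q i j) := fun i j x => hq2' i j x
  have hqsym : ∀ i j, q i j = q j i := by
    intro i j
    apply MvPolynomial.funext
    intro x
    have h := congrFun (congrFun (hsym x) j) i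
    rw [Matrix.transpose_apply] at h
    rw [← hq2 i j x, ← hq2 j i x]
    exact h
  have hMstar : ∀ (x : V3) (a b : Fin 3),
      mcurlstar S x a b = eval x (pcurl (fun i => q i b) a) := by
    intro x a b
    have hfun : (fun y => (S y)ᵀ b) = fun y i => eval y (q i b) := by
      funext y i
      rw [Matrix.transpose_apply, hq2 i b y]
    show (mcurl (fun y => (S y)ᵀ) x)ᵀ a b = _
    rw [Matrix.transpose_apply]
    show vcurl (fun y => (S y)ᵀ b) x a = _
    rw [hfun]
    exact vcurl_eval (fun i => q i b) x a
  have hccsE : ∀ p r : Fin 3,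
      pcurl (fun b => pcurl (fun i => q i b) p) r = 0 := by
    intro p r
    apply MvPolynomial.funext
    intro x
    rw [map_zero]
    have hrow : (fun y => mcurlstar S y p)
        = fun y b => eval y (pcurl (fun i => q i b) p) := by
      funext y b
      exact hMstar y p b
    have h1 : ccs S x p r = eval x (pcurl (fun b => pcurl (fun i => q i b) p) r) := by
      show vcurl (fun y => mcurlstar S y p) x r = _
      rw [hrow]
      exact vcurl_eval _ x r
    rw [← h1, hccs x]
    rfl
  -- expanded curl-curl* equations
  have h00 := hccsE 0 0
  have h01 := hccsE 0 1
  have h02 := hccsE 0 2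
  have h10 := hccsE 1 0
  have h11 := hccsE 1 1
  have h12 := hccsE 1 2
  have h20 := hccsE 2 0
  have h21 := hccsE 2 1
  have h22 := hccsE 2 2
  simp only [pcurl, Matrix.cons_val_zero, Matrix.cons_val_one, Matrix.head_cons,
    Matrix.cons_val_two, Matrix.vecHead, Matrix.vecTail, Matrix.cons_val_succ, Function.comp_apply, map_sub]
    at h00 h01 h02 h10 h11 h12 h20 h21 h22
  -- symmetry rewrites
  have e10 : q 1 0 = q 0 1 := hqsym 1 0
  have e20 : q 2 0 = q 0 2 := hqsym 2 0
  have e21 : q 2 1 = q 1 2 := hqsym 2 1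
  have c10 : ∀ p : P3, pderiv 1 (pderiv 0 p) = pderiv 0 (pderiv 1 p) :=
    fun p => pderiv_comm' 1 0 p
  have c20 : ∀ p : P3, pderiv 2 (pderiv 0 p) = pderiv 0 (pderiv 2 p) :=
    fun p => pderiv_comm' 2 0 p
  have c21 : ∀ p : P3, pderiv 2 (pderiv 1 p) = pderiv 1 (pderiv 2 p) :=
    fun p => pderiv_comm' 2 1 p
  simp only [e10, e20, e21, c10, c20, c21] at h00 h01 h02 h10 h11 h12 h20 h21 h22
  -- degree bound for the curl-free fields defining the rotation
  have hdv : ∀ (a b : Fin 3) (m : Fin 3),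
      (pderiv a (q b m) - pderiv b (q a m)).totalDegree ≤ k + 2 := by
    intro a b m
    refine le_trans (MvPolynomial.totalDegree_sub _ _) (max_le ?_ ?_) <;>
      exact totalDegree_pderiv_le _ _ _ (le_trans (hq1 _ _) (by omega))
  -- construct the three rotation potentials
  obtain ⟨f01, hf01, hf01d⟩ := polyPoincare (k + 2)
    (fun m => pderiv 1 (q 0 m) - pderiv 0 (q 1 m))
    (by
      intro a b
      fin_cases a <;> fin_cases b <;>
        simp only [Fin.zero_eta, Fin.mk_one, Fin.reduceFinMk, e10, e20, e21, c10, c20, c21, map_sub] <;>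
        first
          | rfl
          | linear_combination h00
          | linear_combination -h00
          | linear_combination h01
          | linear_combination -h01
          | linear_combination h02
          | linear_combination -h02
          | linear_combination h10
          | linear_combination -h10
          | linear_combination h11
          | linear_combination -h11
          | linear_combination h12
          | linear_combination -h12
          | linear_combination h20
          | linear_combination -h20
          | linear_combination h21
          | linear_combination -h21
          | linear_combination h22
          | linear_combination -h22)
    (fun m => hdv 1 0 m)
  obtain ⟨f02, hf02, hf02d⟩ := polyPoincare (k + 2)
    (fun m => pderiv 2 (q 0 m) - pderiv 0 (q 2 m))
    (by
      intro a b
      fin_cases a <;> fin_cases b <;>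
        simp only [Fin.zero_eta, Fin.mk_one, Fin.reduceFinMk, e10, e20, e21, c10, c20, c21, map_sub] <;>
        first
          | rfl
          | linear_combination h00
          | linear_combination -h00
          | linear_combination h01
          | linear_combination -h01
          | linear_combination h02
          | linear_combination -h02
          | linear_combination h10
          | linear_combination -h10
          | linear_combination h11
          | linear_combination -h11
          | linear_combination h12
          | linear_combination -h12
          | linear_combination h20
          | linear_combination -h20
          | linear_combination h21
          | linear_combination -h21
          | linear_combination h22
          | linear_combination -h22)
    (fun m => hdv 2 0 m)
  obtain ⟨f12, hf12, hf12d⟩ := polyPoincare (k + 2)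
    (fun m => pderiv 2 (q 1 m) - pderiv 1 (q 2 m))
    (by
      intro a b
      fin_cases a <;> fin_cases b <;>
        simp only [Fin.zero_eta, Fin.mk_one, Fin.reduceFinMk, e10, e20, e21, c10, c20, c21, map_sub] <;>
        first
          | rfl
          | linear_combination h00
          | linear_combination -h00
          | linear_combination h01
          | linear_combination -h01
          | linear_combination h02
          | linear_combination -h02
          | linear_combination h10
          | linear_combination -h10
          | linear_combination h11
          | linear_combination -h11
          | linear_combination h12
          | linear_combination -h12
          | linear_combination h20
          | linear_combination -h20
          | linear_combination h21
          | linear_combination -h21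
          | linear_combination h22
          | linear_combination -h22)
    (fun m => hdv 2 1 m)
  -- the skew-symmetric rotation matrix
  set w : Fin 3 → Fin 3 → P3 :=
    ![![0, f01, f02], ![-f01, 0, f12], ![-f02, -f12, 0]] with hwdef
  have hw : ∀ i j m, pderiv m (w i j) = pderiv j (q i m) - pderiv i (q j m) := by
    intro i j m
    fin_cases i <;> fin_cases j <;>
      simp only [Fin.zero_eta, Fin.mk_one, Fin.reduceFinMk, hwdef, Matrix.cons_val_zero, Matrix.cons_val_one, Matrix.head_cons,
        Matrix.cons_val_two, Matrix.vecHead, Matrix.vecTail, Matrix.cons_val_succ,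
        Function.comp_apply, map_zero, map_neg, hf01, hf02, hf12, neg_sub, sub_self]
  have hwskew : ∀ i j, w j i = - w i j := by
    intro i j
    fin_cases i <;> fin_cases j <;>
      simp [Fin.zero_eta, Fin.mk_one, Fin.reduceFinMk, hwdef, Matrix.cons_val_zero, Matrix.cons_val_one, Matrix.head_cons,
        Matrix.cons_val_two, Matrix.vecHead, Matrix.vecTail, Matrix.cons_val_succ]
  have hwd : ∀ i j, (w i j).totalDegree ≤ k + 3 := by
    intro i j
    fin_cases i <;> fin_cases j <;>
      simp only [Fin.zero_eta, Fin.mk_one, Fin.reduceFinMk, hwdef, Matrix.cons_val_zero, Matrix.cons_val_one, Matrix.head_cons,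
        Matrix.cons_val_two, Matrix.vecHead, Matrix.vecTail, Matrix.cons_val_succ,
        Function.comp_apply, MvPolynomial.totalDegree_neg] <;>
      first
        | simp
        | exact hf01d
        | exact hf02d
        | exact hf12d
  -- construct the displacement components
  have hu : ∀ i : Fin 3, ∃ f : P3,
      (∀ j, pderiv j f = q i j + w i j) ∧ f.totalDegree ≤ (k + 3) + 1 := by
    intro i
    apply polyPoincare (k + 3) (fun m => q i m + w i m)
    · intro a b
      show pderiv a (q i b + w i b) = pderiv b (q i a + w i a)
      rw [map_add, map_add, hw i b a, hw i a b, hqsym b a]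
      ring
    · intro m
      refine le_trans (MvPolynomial.totalDegree_add _ _) (max_le (hq1 i m) (hwd i m))
  choose up hup hupd using hu
  refine ⟨fun x i => eval x (up i), fun i => ⟨up i, by simpa using hupd i, fun x => rfl⟩, ?_⟩
  intro x
  ext i j
  show (2⁻¹ : ℝ) * (mgrad (fun x i => eval x (up i)) x i j
      + (mgrad (fun x i => eval x (up i)) x)ᵀ i j) = S x i j
  rw [Matrix.transpose_apply]
  show (2⁻¹ : ℝ) * (pd j (fun y => eval y (up i)) x + pd i (fun y => eval y (up j)) x) = _
  rw [pd_eval, pd_eval, hup i j, hup j i, hwskew i j, hqsym j i, hq2 i j x]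
  simp only [map_add, map_neg]
  ring
end
end

section
/- Let e be an edge of a nondegenerate tetrahedron K shared by faces f₋ and f₊ with outward unit normals n₋, n₊, and let s be a unit tangent to e. The space N^e = { S ∈ S : Q_{n₋} S Q_{n₋} = 0 and Q_{n₊} S Q_{n₊} = 0 } of constant symmetric matrices is one-dimensional, spanned by G_e = n₋ n₊ᵀ + n₊ n₋ᵀ; moreover G_e s = 0 and m₋ᵀ G_e m₋ = m₊ᵀ G_e m₊ = 0, where m_± is the unit vector in f_± normal to e pointing into f_±. -/
/-!
For symmetric `S`, the condition `Q_n S Q_n = 0` says exactly that `S = n uᵀ + u nᵀ` for some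
`u`: expanding `(1 - n nᵀ) S (1 - n nᵀ)` gives `S = n wᵀ + w nᵀ - (n·w) n nᵀ` with `w = S n`.
Write `S = n₋ uᵀ + u n₋ᵀ`. Then `Q₊ S Q₊ = a bᵀ + b aᵀ` with `a = Q₊ n₋` and `b = Q₊ u`; here
`a ≠ 0` because `n₋, n₊` are independent, and `a bᵀ + b aᵀ = 0` with `a ≠ 0` forces `b = 0`
(apply it to `a` and pair with `a`). So `u` is a multiple of `n₊`, i.e. `S` is a multiple of
`G_e`. The remaining identities follow from `G_e v = (n₊·v) n₋ + (n₋·v) n₊`.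
-/

open Matrix

noncomputable section

namespace Matrix

variable {R ι : Type*}

/-- The paper's `G_e` is `symmVecMulVec n₋ n₊`. -/
def symmVecMulVec [Mul R] [Add R] (a b : ι → R) : Matrix ι ι R :=
  vecMulVec a b + vecMulVec b a

/-- The paper's `Q_n`; the orthogonal projection onto `n^⊥` when `n ⬝ᵥ n = 1`. -/
def perpProj [Ring R] [DecidableEq ι] (n : ι → R) : Matrix ι ι R :=
  1 - vecMulVec n n

theorem symmVecMulVec_comm [Mul R] [AddCommMagma R] (a b : ι → R) :
    symmVecMulVec a b = symmVecMulVec b a :=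
  add_comm _ _

section CommRing

variable [CommRing R] (a b n u v : ι → R)

theorem transpose_symmVecMulVec : (symmVecMulVec a b)ᵀ = symmVecMulVec a b := by
  rw [symmVecMulVec, transpose_add, transpose_vecMulVec, transpose_vecMulVec, add_comm]

theorem symmVecMulVec_smul_right (c : R) :
    symmVecMulVec a (c • b) = c • symmVecMulVec a b := by
  rw [symmVecMulVec, symmVecMulVec, vecMulVec_smul, smul_vecMulVec, smul_add]

@[simp]
theorem zero_symmVecMulVec : symmVecMulVec 0 b = 0 := by
  simp [symmVecMulVec]

theorem symmVecMulVec_mulVec [Fintype ι] :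
    symmVecMulVec a b *ᵥ v = (b ⬝ᵥ v) • a + (a ⬝ᵥ v) • b := by
  simp only [symmVecMulVec, add_mulVec, vecMulVec_mulVec, op_smul_eq_smul]

theorem dotProduct_symmVecMulVec_mulVec [Fintype ι] :
    v ⬝ᵥ (symmVecMulVec a b *ᵥ v) = 2 * ((a ⬝ᵥ v) * (b ⬝ᵥ v)) := by
  rw [symmVecMulVec_mulVec, dotProduct_add, dotProduct_smul, dotProduct_smul, smul_eq_mul,
    smul_eq_mul, dotProduct_comm v a, dotProduct_comm v b]
  ring

theorem mul_symmVecMulVec_mul_transpose [Fintype ι] (M : Matrix ι ι R) :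
    M * symmVecMulVec a b * Mᵀ = symmVecMulVec (M *ᵥ a) (M *ᵥ b) := by
  simp only [symmVecMulVec, mul_add, add_mul, mul_vecMulVec, vecMulVec_mul, vecMul_transpose]

variable [DecidableEq ι]

theorem perpProj_mulVec [Fintype ι] : perpProj n *ᵥ v = v - (n ⬝ᵥ v) • n := by
  rw [perpProj, sub_mulVec, one_mulVec, vecMulVec_mulVec, op_smul_eq_smul]

theorem transpose_perpProj : (perpProj n)ᵀ = perpProj n := by
  rw [perpProj, transpose_sub, transpose_one, transpose_vecMulVec]

variable {n}

theorem perpProj_mulVec_self [Fintype ι] (hn : n ⬝ᵥ n = 1) : perpProj n *ᵥ n = 0 := by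
  rw [perpProj_mulVec, hn, one_smul, sub_self]

theorem perpProj_mul_symmVecMulVec_self_mul_perpProj [Fintype ι] (hn : n ⬝ᵥ n = 1) :
    perpProj n * symmVecMulVec n u * perpProj n = 0 := by
  nth_rewrite 2 [← transpose_perpProj n]
  rw [mul_symmVecMulVec_mul_transpose, perpProj_mulVec_self hn, zero_symmVecMulVec]

end CommRing

theorem exists_eq_symmVecMulVec_of_perpProj_mul_mul_perpProj_eq_zero [Field R] [NeZero (2 : R)]
    [Fintype ι] [DecidableEq ι] {n : ι → R} {S : Matrix ι ι R} (hS : Sᵀ = S)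
    (h : perpProj n * S * perpProj n = 0) : ∃ u, S = symmVecMulVec n u := by
  set w := S *ᵥ n
  have hPS : vecMulVec n n * S = vecMulVec n w := by
    rw [vecMulVec_mul, ← mulVec_transpose, hS]
  have hPSP : vecMulVec n n * S * vecMulVec n n = (n ⬝ᵥ w) • vecMulVec n n := by
    rw [hPS, vecMulVec_mul_vecMulVec, vecMulVec_smul, dotProduct_comm]
  have hexp : perpProj n * S * perpProj n =
      S - vecMulVec n n * S - S * vecMulVec n n + vecMulVec n n * S * vecMulVec n n := by
    simp only [perpProj]
    noncomm_ring
  rw [hexp, hPSP, hPS, mul_vecMulVec] at h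
  obtain ⟨c, hc⟩ : ∃ c, n ⬝ᵥ w = 2 * c := ⟨(n ⬝ᵥ w) / 2, (mul_div_cancel₀ _ two_ne_zero).symm⟩
  rw [hc] at h
  refine ⟨w - c • n, ?_⟩
  rw [symmVecMulVec, vecMulVec_sub, sub_vecMulVec, vecMulVec_smul, smul_vecMulVec]
  linear_combination (norm := module) h

section LinearOrderedField

variable [Field R] [LinearOrder R] [IsStrictOrderedRing R] [Fintype ι]

theorem eq_zero_of_symmVecMulVec_eq_zero {a b : ι → R} (ha : a ≠ 0)
    (h : symmVecMulVec a b = 0) : b = 0 := by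
  have haa : a ⬝ᵥ a ≠ 0 := mt dotProduct_self_eq_zero.mp ha
  have hba : b ⬝ᵥ a = 0 := by
    have hquad := dotProduct_symmVecMulVec_mulVec a b a
    rw [h, zero_mulVec, dotProduct_zero, eq_comm] at hquad
    simpa [haa] using hquad
  have hmul : (b ⬝ᵥ a) • a + (a ⬝ᵥ a) • b = 0 := by
    rw [← symmVecMulVec_mulVec, h, zero_mulVec]
  rw [hba, zero_smul, zero_add, smul_eq_zero] at hmul
  exact hmul.resolve_left haa

theorem symmVecMulVec_ne_zero {a b : ι → R} (h : LinearIndependent R ![a, b]) :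
    symmVecMulVec a b ≠ 0 :=
  fun h0 => h.ne_zero 1 (eq_zero_of_symmVecMulVec_eq_zero (h.ne_zero 0) h0)

theorem exists_eq_smul_symmVecMulVec_of_perpProj_mul_mul_perpProj_eq_zero [DecidableEq ι]
    {n₁ n₂ : ι → R} (hn : LinearIndependent R ![n₁, n₂]) {S : Matrix ι ι R} (hS : Sᵀ = S)
    (h₁ : perpProj n₁ * S * perpProj n₁ = 0) (h₂ : perpProj n₂ * S * perpProj n₂ = 0) :
    ∃ c : R, S = c • symmVecMulVec n₁ n₂ := by
  obtain ⟨u, rfl⟩ := exists_eq_symmVecMulVec_of_perpProj_mul_mul_perpProj_eq_zero hS h₁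
  obtain ⟨-, hn₁₂⟩ := linearIndependent_fin2.mp hn
  have hQn₁ : perpProj n₂ *ᵥ n₁ ≠ 0 := by
    rw [perpProj_mulVec, sub_ne_zero]
    exact (hn₁₂ _).symm
  have hQu : perpProj n₂ *ᵥ u = 0 := by
    refine eq_zero_of_symmVecMulVec_eq_zero hQn₁ ?_
    rwa [← mul_symmVecMulVec_mul_transpose, transpose_perpProj]
  rw [perpProj_mulVec, sub_eq_zero] at hQu
  refine ⟨n₂ ⬝ᵥ u, ?_⟩
  rw [← symmVecMulVec_smul_right, ← hQu]

end LinearOrderedField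

end Matrix

theorem dot3_eq_dotProduct (a b : V3) : dot3 a b = a ⬝ᵥ b := rfl

theorem edge_space_one_dimensional_general
    (s nn np mm mp : V3)
    (hnn : dot3 nn nn = 1) (hnp : dot3 np np = 1)
    (hsnn : dot3 s nn = 0) (hsnp : dot3 s np = 0)
    (hmmnn : dot3 mm nn = 0) (hmpnp : dot3 mp np = 0)
    (hindep : LinearIndependent ℝ ![nn, np])
    (Ge : M3) (hGe : Ge = vecMulVec nn np + vecMulVec np nn) :
    -- G_e belongs to N^e ...
    Geᵀ = Ge ∧
    (1 - vecMulVec nn nn) * Ge * (1 - vecMulVec nn nn) = 0 ∧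
    (1 - vecMulVec np np) * Ge * (1 - vecMulVec np np) = 0 ∧
    Ge ≠ 0 ∧
    -- ... and spans it
    (∀ S : M3, Sᵀ = S →
      (1 - vecMulVec nn nn) * S * (1 - vecMulVec nn nn) = 0 →
      (1 - vecMulVec np np) * S * (1 - vecMulVec np np) = 0 →
      ∃ c : ℝ, S = c • Ge) ∧
    -- extra algebraic properties
    Ge *ᵥ s = 0 ∧ dot3 mm (Ge *ᵥ mm) = 0 ∧ dot3 mp (Ge *ᵥ mp) = 0 := by
  simp only [dot3_eq_dotProduct] at *
  change Ge = symmVecMulVec nn np at hGe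
  subst hGe
  refine ⟨transpose_symmVecMulVec nn np,
    perpProj_mul_symmVecMulVec_self_mul_perpProj np hnn,
    symmVecMulVec_comm nn np ▸ perpProj_mul_symmVecMulVec_self_mul_perpProj nn hnp,
    symmVecMulVec_ne_zero hindep,
    fun S hS h₁ h₂ =>
      exists_eq_smul_symmVecMulVec_of_perpProj_mul_mul_perpProj_eq_zero hindep hS h₁ h₂,
    ?_, ?_, ?_⟩
  · rw [symmVecMulVec_mulVec, dotProduct_comm np, dotProduct_comm nn, hsnn, hsnp, zero_smul,
      zero_smul, add_zero]
  · rw [dotProduct_symmVecMulVec_mulVec, dotProduct_comm, hmmnn, zero_mul, mul_zero]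
  · rw [dotProduct_symmVecMulVec_mulVec, dotProduct_comm np, hmpnp, mul_zero, mul_zero]

/-- at an edge `e` of a tetrahedron with face normals `nn, np`,
the space `N^e = {S ∈ 𝕊 : Q_{nn} S Q_{nn} = 0, Q_{np} S Q_{np} = 0}` is spanned by
`G_e = nn npᵀ + np nnᵀ`, which moreover satisfies `G_e s = 0` and
`mmᵀ G_e mm = mpᵀ G_e mp = 0`. -/
theorem edge_space_one_dimensional
    (s nn np mm mp : V3)
    (hs : dot3 s s = 1) (hnn : dot3 nn nn = 1) (hnp : dot3 np np = 1)
    (hmm : dot3 mm mm = 1) (hmp : dot3 mp mp = 1)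
    (hsnn : dot3 s nn = 0) (hsnp : dot3 s np = 0)
    (hmms : dot3 mm s = 0) (hmps : dot3 mp s = 0)
    (hmmnn : dot3 mm nn = 0) (hmpnp : dot3 mp np = 0)
    (hindep : LinearIndependent ℝ ![nn, np])
    (Ge : M3) (hGe : Ge = vecMulVec nn np + vecMulVec np nn) :
    -- G_e belongs to N^e ...
    Geᵀ = Ge ∧
    (1 - vecMulVec nn nn) * Ge * (1 - vecMulVec nn nn) = 0 ∧
    (1 - vecMulVec np np) * Ge * (1 - vecMulVec np np) = 0 ∧
    Ge ≠ 0 ∧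
    -- ... and spans it
    (∀ S : M3, Sᵀ = S →
      (1 - vecMulVec nn nn) * S * (1 - vecMulVec nn nn) = 0 →
      (1 - vecMulVec np np) * S * (1 - vecMulVec np np) = 0 →
      ∃ c : ℝ, S = c • Ge) ∧
    -- extra algebraic properties
    Ge *ᵥ s = 0 ∧ dot3 mm (Ge *ᵥ mm) = 0 ∧ dot3 mp (Ge *ᵥ mp) = 0 :=
  edge_space_one_dimensional_general s nn np mm mp hnn hnp hsnn hsnp hmmnn hmpnp hindep Ge hGe
end
end

section
/- Let e be an edge of a tetrahedron shared by faces with outward unit normals n₋, n₊, unit tangent s to e, and in-face edge normals m₋, m₊ (pointing from e into the respective faces). Then m₋ᵀ n₊ = m₊ᵀ n₋ and the linear map sending (m₋, n₋) to (n₊, m₊) is a rotation in the plane orthogonal to e; consequently, for any smooth vector field v, ∂_{m₋}(vᵀn₋) - ∂_{n₋}(vᵀm₋) = ∂_{n₊}(vᵀm₊) - ∂_{m₊}(vᵀn₊). -/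
open Matrix

noncomputable section

lemma clm_apply_eq_sum (L : V3 →L[ℝ] ℝ) (a : V3) :
    L a = ∑ k, a k * L (Pi.single k 1) := by
  have ha : a = ∑ k, a k • (Pi.single k 1 : V3) := by
    ext j
    simp [Pi.single_apply, Finset.sum_apply, eq_comm]
  conv_lhs => rw [ha]
  rw [map_sum]
  simp [smul_eq_mul]

lemma fderiv_dot3 (v : V3 → V3) (hd : ∀ i, Differentiable ℝ fun y => v y i)
    (b : V3) (x a : V3) :
    fderiv ℝ (fun y => dot3 (v y) b) x a
      = ∑ i, ∑ k, b i * (a k * fderiv ℝ (fun y => v y i) x (Pi.single k 1)) := by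
  have h : HasFDerivAt (fun y => dot3 (v y) b)
      (∑ i, b i • fderiv ℝ (fun y => v y i) x) x := by
    have h1 : ∀ i : Fin 3, HasFDerivAt (fun y => v y i * b i)
        (b i • fderiv ℝ (fun y => v y i) x) x :=
      fun i => ((hd i x).hasFDerivAt).mul_const (b i)
    have h2 := HasFDerivAt.fun_sum (fun i (_ : i ∈ Finset.univ) => h1 i)
    simpa [dot3] using h2
  rw [h.fderiv]
  simp only [ContinuousLinearMap.sum_apply, ContinuousLinearMap.smul_apply, smul_eq_mul]
  refine Finset.sum_congr rfl fun i _ => ?_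
  rw [clm_apply_eq_sum, Finset.mul_sum]

/-- with `s, mm, nn` and `s, mp, np` orthonormal bases attached to the
two faces meeting an edge (orientations as in the geometric situation, encoded by
`mm × nn = np × mp`), one has `mmᵀ np = mpᵀ nn`; the map `(mm, nn) ↦ (np, mp)`
is a rotation of the plane orthogonal to the edge; and for every smooth vector field `v`,
`∂_{mm}(vᵀnn) - ∂_{nn}(vᵀmm) = ∂_{np}(vᵀmp) - ∂_{mp}(vᵀnp)`. -/
theorem edge_rotation_identity
    (s nn np mm mp : V3)
    (hs : dot3 s s = 1) (hnn : dot3 nn nn = 1) (hnp : dot3 np np = 1)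
    (hmm : dot3 mm mm = 1) (hmp : dot3 mp mp = 1)
    (hsnn : dot3 s nn = 0) (hsnp : dot3 s np = 0)
    (hmms : dot3 mm s = 0) (hmps : dot3 mp s = 0)
    (hmmnn : dot3 mm nn = 0) (hmpnp : dot3 mp np = 0)
    (horient : crossProduct mm nn = crossProduct np mp) :
    dot3 mm np = dot3 mp nn ∧
    (∃ R : M3, Rᵀ * R = 1 ∧ R.det = 1 ∧ R *ᵥ s = s ∧ R *ᵥ mm = np ∧ R *ᵥ nn = mp) ∧
    (∀ v : V3 → V3, (∀ i, ContDiff ℝ (⊤ : ℕ∞) (fun x => v x i)) → ∀ x : V3,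
      fderiv ℝ (fun y => dot3 (v y) nn) x mm - fderiv ℝ (fun y => dot3 (v y) mm) x nn =
        fderiv ℝ (fun y => dot3 (v y) mp) x np - fderiv ℝ (fun y => dot3 (v y) np) x mp) := by
  have c0 := congrFun horient 0
  have c1 := congrFun horient 1
  have c2 := congrFun horient 2
  simp only [cross_apply, Matrix.cons_val_zero, Matrix.cons_val_one, Matrix.head_cons,
    Matrix.cons_val_two, Matrix.tail_cons] at c0 c1 c2
  simp only [dot3, Fin.sum_univ_three] at hs hnn hnp hmm hmp hsnn hsnp hmms hmps hmmnn hmpnp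
  refine ⟨?_, ?_, ?_⟩
  · simp only [dot3, Fin.sum_univ_three]
    linear_combination (nn 2 * np 1 - nn 1 * np 2) * c0 + (nn 0 * np 2 - nn 2 * np 0) * c1 +
      (nn 1 * np 0 - nn 0 * np 1) * c2 -
      (mm 0 * np 0 + mm 1 * np 1 + mm 2 * np 2) * hnn +
      (mp 0 * nn 0 + mp 1 * nn 1 + mp 2 * nn 2) * hnp +
      (nn 0 * np 0 + nn 1 * np 1 + nn 2 * np 2) * hmmnn -
      (nn 0 * np 0 + nn 1 * np 1 + nn 2 * np 2) * hmpnp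
  · set M : M3 := Matrix.of ![s, mm, nn] with hMdef
    set N : M3 := Matrix.of ![s, np, mp] with hNdef
    have hM : M * Mᵀ = 1 := by
      ext i j
      fin_cases i <;> fin_cases j <;>
        simp only [hMdef, Matrix.mul_apply, Matrix.transpose_apply, Matrix.of_apply,
          Fin.sum_univ_three, Matrix.cons_val_zero, Matrix.cons_val_one, Matrix.head_cons,
          Matrix.cons_val_two, Matrix.tail_cons, Matrix.one_apply] <;>
        norm_num [Fin.ext_iff] <;> linarith
    have hN : N * Nᵀ = 1 := by
      ext i j
      fin_cases i <;> fin_cases j <;>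
        simp only [hNdef, Matrix.mul_apply, Matrix.transpose_apply, Matrix.of_apply,
          Fin.sum_univ_three, Matrix.cons_val_zero, Matrix.cons_val_one, Matrix.head_cons,
          Matrix.cons_val_two, Matrix.tail_cons, Matrix.one_apply] <;>
        norm_num [Fin.ext_iff] <;> linarith
    have hM' : Mᵀ * M = 1 := mul_eq_one_comm.mp hM
    refine ⟨Nᵀ * M, ?_, ?_, ?_, ?_, ?_⟩
    · rw [Matrix.transpose_mul, Matrix.transpose_transpose, Matrix.mul_assoc,
        ← Matrix.mul_assoc N, hN, Matrix.one_mul, hM']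
    · have hdM : M.det * M.det = 1 := by
        have h := congrArg Matrix.det hM
        rwa [Matrix.det_mul, Matrix.det_transpose, Matrix.det_one] at h
      have hMN : N.det = M.det := by
        rw [Matrix.det_fin_three, Matrix.det_fin_three]
        simp only [hMdef, hNdef, Matrix.of_apply, Matrix.cons_val_zero, Matrix.cons_val_one,
          Matrix.head_cons, Matrix.cons_val_two, Matrix.tail_cons]
        linear_combination (-(s 0)) * c0 - s 1 * c1 - s 2 * c2
      rw [Matrix.det_mul, Matrix.det_transpose, hMN, hdM]
    · funext i
      simp only [Matrix.mulVec, Matrix.mul_apply, dotProduct, Matrix.transpose_apply,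
        Fin.sum_univ_three, hMdef, hNdef, Matrix.of_apply, Matrix.cons_val_zero,
        Matrix.cons_val_one, Matrix.head_cons, Matrix.cons_val_two, Matrix.tail_cons]
      linear_combination s i * hs + np i * hmms + mp i * hsnn
    · funext i
      simp only [Matrix.mulVec, Matrix.mul_apply, dotProduct, Matrix.transpose_apply,
        Fin.sum_univ_three, hMdef, hNdef, Matrix.of_apply, Matrix.cons_val_zero,
        Matrix.cons_val_one, Matrix.head_cons, Matrix.cons_val_two, Matrix.tail_cons]
      linear_combination s i * hmms + np i * hmm + mp i * hmmnn
    · funext i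
      simp only [Matrix.mulVec, Matrix.mul_apply, dotProduct, Matrix.transpose_apply,
        Fin.sum_univ_three, hMdef, hNdef, Matrix.of_apply, Matrix.cons_val_zero,
        Matrix.cons_val_one, Matrix.head_cons, Matrix.cons_val_two, Matrix.tail_cons]
      linear_combination s i * hsnn + np i * hmmnn + mp i * hnn
  · intro v hv x
    have hd : ∀ i, Differentiable ℝ (fun y => v y i) := fun i => (hv i).differentiable (by simp)
    rw [fderiv_dot3 v hd nn x mm, fderiv_dot3 v hd mm x nn, fderiv_dot3 v hd mp x np,
      fderiv_dot3 v hd np x mp]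
    simp only [Fin.sum_univ_three]
    linear_combination
      (fderiv ℝ (fun y => v y 2) x (Pi.single 1 1) - fderiv ℝ (fun y => v y 1) x (Pi.single 2 1)) * c0 +
      (fderiv ℝ (fun y => v y 0) x (Pi.single 2 1) - fderiv ℝ (fun y => v y 2) x (Pi.single 0 1)) * c1 +
      (fderiv ℝ (fun y => v y 1) x (Pi.single 0 1) - fderiv ℝ (fun y => v y 0) x (Pi.single 1 1)) * c2
end
end
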